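/- arXiv:1608.03580 — 5 statements merged into one kernel-verified Lean document; each statement's English description precedes it below -/
import Mathlib

section
/- For any x, y ∈ R^d contained in a set C with ||x||₂, ||y||₂ ≤ D, and π(x) = (x, R), π(y) = (y, R) ∈ R^{d+1}: the radially-projected points satisfy || (R/||π(x)||₂)π(x) - (R/||π(y)||₂)π(y) ||₂ ≤ D²/R + ||x - y||₂. -/
/-!
Lifting by a constant last coordinate preserves distances, and radial projection onto the
sphere of radius `R` is `1`-Lipschitz outside the open ball of radius `R`: writing `u = a • e`,
`v = b • f` with `e, f` unit vectors, `‖u - v‖² = (a - b)² + a b ‖e - f‖² ≥ R² ‖e - f‖²`.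
So the projected points are even at distance at most `‖x - y‖`.
-/

section RadialProjection

variable {E : Type*} [NormedAddCommGroup E] [InnerProductSpace ℝ E]

lemma norm_smul_sub_smul_sq_of_norm_eq_one {e f : E} (he : ‖e‖ = 1) (hf : ‖f‖ = 1) (a b : ℝ) :
    ‖a • e - b • f‖ ^ 2 = (a - b) ^ 2 + a * b * ‖e - f‖ ^ 2 := by
  rw [norm_sub_sq_real, norm_sub_sq_real, norm_smul, norm_smul, real_inner_smul_left,
    real_inner_smul_right, he, hf, Real.norm_eq_abs, Real.norm_eq_abs, mul_pow, mul_pow, sq_abs,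
    sq_abs]
  ring

theorem norm_div_norm_smul_sub_le {R : ℝ} (hR : 0 < R) {u v : E} (hu : R ≤ ‖u‖)
    (hv : R ≤ ‖v‖) : ‖(R / ‖u‖) • u - (R / ‖v‖) • v‖ ≤ ‖u - v‖ := by
  have hu0 : u ≠ 0 := norm_pos_iff.mp (hR.trans_le hu)
  have hv0 : v ≠ 0 := norm_pos_iff.mp (hR.trans_le hv)
  set e := ‖u‖⁻¹ • u
  set f := ‖v‖⁻¹ • v
  have he : ‖e‖ = 1 := norm_smul_inv_norm hu0
  have hf : ‖f‖ = 1 := norm_smul_inv_norm hv0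
  have hue : u = ‖u‖ • e := by rw [smul_inv_smul₀ (norm_ne_zero_iff.mpr hu0)]
  have hvf : v = ‖v‖ • f := by rw [smul_inv_smul₀ (norm_ne_zero_iff.mpr hv0)]
  have hproj : (R / ‖u‖) • u - (R / ‖v‖) • v = R • e - R • f := by
    simp only [e, f, smul_smul, div_eq_mul_inv]
  rw [← sq_le_sq₀ (norm_nonneg _) (norm_nonneg _), hproj, hue, hvf,
    norm_smul_sub_smul_sq_of_norm_eq_one he hf, norm_smul_sub_smul_sq_of_norm_eq_one he hf,
    sub_self]
  have hRR : R * R ≤ ‖u‖ * ‖v‖ := mul_le_mul hu hv hR.le (hR.le.trans hu)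
  nlinarith [sq_nonneg (‖u‖ - ‖v‖), sq_nonneg ‖e - f‖]

end RadialProjection

lemma EuclideanSpace.norm_eq_of_apply_castSucc {d : ℕ} (z : EuclideanSpace ℝ (Fin (d + 1)))
    (x : EuclideanSpace ℝ (Fin d)) (hinit : ∀ i : Fin d, z i.castSucc = x i)
    (hlast : z (Fin.last d) = 0) : ‖z‖ = ‖x‖ := by
  simp only [EuclideanSpace.norm_eq, Fin.sum_univ_castSucc, hinit, hlast, norm_zero,
    ne_eq, OfNat.ofNat_ne_zero, not_false_eq_true, zero_pow, add_zero]

theorem stmt8_general (d : ℕ) (R D : ℝ) (hR : 0 < R)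
    (x y : EuclideanSpace ℝ (Fin d))
    (px py : EuclideanSpace ℝ (Fin (d + 1)))
    (hpx : ∀ i : Fin (d + 1), px i = if h : (i : ℕ) < d then x ⟨i, h⟩ else R)
    (hpy : ∀ i : Fin (d + 1), py i = if h : (i : ℕ) < d then y ⟨i, h⟩ else R) :
    ‖(R / ‖px‖) • px - (R / ‖py‖) • py‖ ≤ D ^ 2 / R + ‖x - y‖ := by
  have hR_le : ∀ p : EuclideanSpace ℝ (Fin (d + 1)), p (Fin.last d) = R → R ≤ ‖p‖ :=
    fun p hp => by simpa [hp, abs_of_pos hR] using PiLp.norm_apply_le p (Fin.last d)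
  have hdist : ‖px - py‖ = ‖x - y‖ :=
    EuclideanSpace.norm_eq_of_apply_castSucc _ _ (fun i => by simp [hpx, hpy])
      (by simp [hpx, hpy])
  calc ‖(R / ‖px‖) • px - (R / ‖py‖) • py‖ ≤ ‖px - py‖ :=
        norm_div_norm_smul_sub_le hR (hR_le px (by simp [hpx])) (hR_le py (by simp [hpy]))
    _ = ‖x - y‖ := hdist
    _ ≤ D ^ 2 / R + ‖x - y‖ := le_add_of_nonneg_left (by positivity)

theorem stmt8 (d : ℕ) (R D : ℝ) (hR : 0 < R)
    (x y : EuclideanSpace ℝ (Fin d)) (hx : ‖x‖ ≤ D) (hy : ‖y‖ ≤ D)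
    (px py : EuclideanSpace ℝ (Fin (d + 1)))
    (hpx : ∀ i : Fin (d + 1), px i = if h : (i : ℕ) < d then x ⟨i, h⟩ else R)
    (hpy : ∀ i : Fin (d + 1), py i = if h : (i : ℕ) < d then y ⟨i, h⟩ else R) :
    ‖(R / ‖px‖) • px - (R / ‖py‖) • py‖ ≤ D ^ 2 / R + ‖x - y‖ :=
  stmt8_general d R D hR x y px py hpx hpy
end

section
/- (Two-function hypercontractive inequality.) Let σ ∈ (0,1) and let p, q ∈ [1, ∞) satisfy (p-1)(q-1) = σ². Then for all functions f, g : {-1,1}^d → R, ⟨T_σ f, g⟩ ≤ ||f||_p · ||g||_q, where T_σ is the noise operator with correlation σ, the inner product is E_{x uniform}[T_σ f(x) · g(x)], and the norms are with respect to the uniform measure on {-1,1}^d. -/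
/-- Expectation over the uniform measure on `{-1,1}^d` (modeled as `Fin d → Bool`). -/
noncomputable def hExp (d : ℕ) (f : (Fin d → Bool) → ℝ) : ℝ :=
  (∑ x : Fin d → Bool, f x) / 2 ^ d

/-- Transition weight of the noise distribution `N_σ(x)`: each coordinate is kept
with probability `σ` and resampled uniformly otherwise. -/
noncomputable def noiseW (σ : ℝ) {d : ℕ} (y x : Fin d → Bool) : ℝ :=
  ∏ i, if y i = x i then (1 + σ) / 2 else (1 - σ) / 2

/-- The noise operator `T_σ f (x) = E_{y ∼ N_σ(x)} [f y]`. -/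
noncomputable def Tnoise (σ : ℝ) {d : ℕ} (f : (Fin d → Bool) → ℝ) :
    (Fin d → Bool) → ℝ :=
  fun x => ∑ y : Fin d → Bool, noiseW σ y x * f y

/-- `L^p` norm with respect to the uniform measure on `{-1,1}^d`. -/
noncomputable def hNorm (d : ℕ) (p : ℝ) (f : (Fin d → Bool) → ℝ) : ℝ :=
  hExp d (fun x => |f x| ^ p) ^ (1 / p)

/-!
Tensorization: on `{-1,1}^(d+1)` the noise operator acts on the first coordinate as the two-point
noise operator does, and on the remaining ones as on `{-1,1}^d`. Applying the inequality on
`{-1,1}^d` to the slices `x 0 = b` therefore reduces it to the two-point case, applied to the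
norms of the slices. On two points, after scaling, it reads
`1 + σ δ ε ≤ ‖1 + δ x‖_p ‖1 + ε x‖_q` for a uniform sign `x`. Let `p ≤ q`. If `q ≥ 2`,
Hölder's inequality with the conjugate exponent `q' ≤ 2` of `q` reduces this to two-point
hypercontractivity `‖1 + σ δ x‖_q' ≤ ‖1 + δ x‖_p`. If `q ≤ 2`, Cauchy–Schwarz together with
hypercontractivity into `L²` does it. Two-point hypercontractivity
`‖1 + ρ t x‖_Q ≤ ‖1 + t x‖_P` for `1 < P ≤ Q ≤ 2`, `ρ² (Q - 1) = P - 1` is proved by calculus: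
as a function of `t`, `‖1 + t x‖_P ^ Q - ‖1 + ρ t x‖_Q ^ Q` and its derivative vanish at `0`,
and its second derivative is nonnegative on `[0, 1)`.
-/

open Real Set

/-- For a uniform sign `x`, `𝔼 (1 + t x) ^ b = symPow b t / 2`. -/
noncomputable def symPow (b t : ℝ) : ℝ := (1 + t) ^ b + (1 - t) ^ b

noncomputable def antisymPow (b t : ℝ) : ℝ := (1 + t) ^ b - (1 - t) ^ b

lemma symPow_neg (b t : ℝ) : symPow b (-t) = symPow b t := by
  rw [symPow, symPow, sub_neg_eq_add, ← sub_eq_add_neg, add_comm]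

lemma one_le_symPow_div_two {r t : ℝ} (hr : 1 ≤ r) (ht : |t| ≤ 1) : 1 ≤ symPow r t / 2 := by
  obtain ⟨ht₁, ht₂⟩ := abs_le.mp ht
  have hadd := one_add_mul_self_le_rpow_one_add ht₁ hr
  have hsub := one_add_mul_self_le_rpow_one_add (s := -t) (by linarith) hr
  rw [← sub_eq_add_neg] at hsub
  rw [symPow]
  linarith

lemma symPow_nonneg {b t : ℝ} (ht : |t| ≤ 1) : 0 ≤ symPow b t := by
  obtain ⟨ht₁, ht₂⟩ := abs_le.mp ht
  exact add_nonneg (rpow_nonneg (by linarith) b) (rpow_nonneg (by linarith) b)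

lemma continuous_symPow {b : ℝ} (hb : 0 ≤ b) : Continuous (symPow b) := by
  unfold symPow
  fun_prop (disch := exact Or.inr hb)

lemma continuous_antisymPow {b : ℝ} (hb : 0 ≤ b) : Continuous (antisymPow b) := by
  unfold antisymPow
  fun_prop (disch := exact Or.inr hb)

lemma hasDerivAt_symPow (b : ℝ) {t : ℝ} (ht : t ∈ Ioo (-1) 1) :
    HasDerivAt (symPow b) (b * antisymPow (b - 1) t) t := by
  have hadd := ((hasDerivAt_id' t).const_add 1).rpow_const (p := b) (.inl (by grind))
  have hsub := ((hasDerivAt_id' t).const_sub 1).rpow_const (p := b) (.inl (by grind))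
  refine (hadd.add hsub).congr_deriv ?_
  rw [antisymPow]
  ring

lemma hasDerivAt_antisymPow (b : ℝ) {t : ℝ} (ht : t ∈ Ioo (-1) 1) :
    HasDerivAt (antisymPow b) (b * symPow (b - 1) t) t := by
  have hadd := ((hasDerivAt_id' t).const_add 1).rpow_const (p := b) (.inl (by grind))
  have hsub := ((hasDerivAt_id' t).const_sub 1).rpow_const (p := b) (.inl (by grind))
  refine (hadd.sub hsub).congr_deriv ?_
  rw [symPow]
  ring

lemma symPow_le_symPow_of_exponent_ge {a b t : ℝ} (hab : a ≤ b) (hb : b ≤ 0)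
    (ht : t ∈ Ico 0 1) : symPow b t ≤ symPow a t := by
  obtain ⟨ht₀, ht₁⟩ := ht
  set u := 1 + t
  set w := 1 - t
  have hu : 1 ≤ u := by grind
  have hw₀ : 0 < w := by grind
  have hw₁ : w ≤ 1 := by grind
  have hc : a - b ≤ 0 := by linarith
  -- AM-GM, as `u w ≤ 1`: `u^(a-b) + w^(a-b) ≥ 2`, i.e. `1 - u^(a-b) ≤ w^(a-b) - 1`
  have hsum : 2 ≤ u ^ (a - b) + w ^ (a - b) := by
    have hprod : 1 ≤ u ^ (a - b) * w ^ (a - b) := by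
      rw [← mul_rpow (by positivity) hw₀.le]
      exact one_le_rpow_of_pos_of_le_one_of_nonpos (by positivity) (by nlinarith) hc
    nlinarith [sq_nonneg (u ^ (a - b) - w ^ (a - b)),
      rpow_nonneg (zero_le_one.trans hu) (a - b), rpow_nonneg hw₀.le (a - b)]
  have hub : u ^ b ≤ w ^ b := rpow_le_rpow_of_nonpos hw₀ (by grind) hb
  have hua : u ^ a = u ^ b * u ^ (a - b) := by rw [← rpow_add (by positivity)]; ring_nf
  have hwa : w ^ a = w ^ b * w ^ (a - b) := by rw [← rpow_add hw₀]; ring_nf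
  have huc : u ^ (a - b) ≤ 1 := rpow_le_one_of_one_le_of_nonpos hu hc
  have hub₀ : 0 ≤ u ^ b := rpow_nonneg (by positivity) b
  rw [symPow, symPow, hua, hwa]
  nlinarith [mul_le_mul_of_nonneg_left (sub_nonneg.mpr huc) hub₀,
    mul_le_mul_of_nonneg_right hub (show 0 ≤ 1 - u ^ (a - b) by linarith)]

lemma symPow_monotoneOn {b : ℝ} (hb : b ≤ 0) : MonotoneOn (symPow b) (Ico 0 1) := by
  have hderiv : ∀ x ∈ Ico (0 : ℝ) 1, HasDerivAt (symPow b) (b * antisymPow (b - 1) x) x :=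
    fun x hx => hasDerivAt_symPow b ⟨by linarith [hx.1], hx.2⟩
  refine monotoneOn_of_hasDerivWithinAt_nonneg (convex_Ico 0 1)
    (fun x hx => (hderiv x hx).continuousAt.continuousWithinAt)
    (fun x hx => (hderiv x (interior_subset hx)).hasDerivWithinAt) fun x hx => ?_
  rw [interior_Ico] at hx
  refine mul_nonneg_of_nonpos_of_nonpos hb (sub_nonpos.mpr ?_)
  exact rpow_le_rpow_of_nonpos (by linarith [hx.2]) (by linarith [hx.1]) (by linarith)

lemma nonneg_of_hasDerivAt_nonneg {f f' : ℝ → ℝ} {b x : ℝ} (hf : ContinuousOn f (Icc 0 b))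
    (hf' : ∀ y ∈ Ioo 0 b, HasDerivAt f (f' y) y) (hf'₀ : ∀ y ∈ Ioo 0 b, 0 ≤ f' y)
    (h₀ : f 0 = 0) (hx : x ∈ Icc 0 b) : 0 ≤ f x := by
  rw [← interior_Icc] at hf' hf'₀
  have hmono := monotoneOn_of_hasDerivWithinAt_nonneg (convex_Icc 0 b) hf
    (fun y hy => (hf' y hy).hasDerivWithinAt) hf'₀
  simpa [h₀] using hmono ⟨le_rfl, hx.1.trans hx.2⟩ hx hx.1

lemma le_of_sq_mul_sub_one_eq {P Q ρ : ℝ} (hP : 1 < P) (hρ₀ : 0 ≤ ρ) (hρ₁ : ρ ≤ 1)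
    (hρ : ρ ^ 2 * (Q - 1) = P - 1) : P ≤ Q := by
  have hρ2 : ρ ^ 2 ≤ 1 := pow_le_one₀ hρ₀ hρ₁
  have hQ : 0 < Q - 1 := by
    by_contra! h
    nlinarith [mul_nonpos_of_nonneg_of_nonpos (sq_nonneg ρ) h]
  nlinarith

lemma symPow_le_rpow_mul_symPow {P Q s y : ℝ} (hP : 1 ≤ P) (hPQ : P ≤ Q) (hQ : Q ≤ 2)
    (hs : 0 ≤ s) (hsy : s ≤ y) (hy : y < 1) :
    symPow (Q - 2) s ≤ (symPow P y / 2) ^ (Q / P - 1) * symPow (P - 2) y := by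
  have hQP : 0 ≤ Q / P - 1 := by rw [sub_nonneg, one_le_div (by linarith)]; exact hPQ
  calc symPow (Q - 2) s ≤ symPow (Q - 2) y :=
        symPow_monotoneOn (by linarith) ⟨hs, hsy.trans_lt hy⟩ ⟨hs.trans hsy, hy⟩ hsy
    _ ≤ symPow (P - 2) y :=
        symPow_le_symPow_of_exponent_ge (by linarith) (by linarith) ⟨hs.trans hsy, hy⟩
    _ ≤ (symPow P y / 2) ^ (Q / P - 1) * symPow (P - 2) y := by
        have hy' : |y| ≤ 1 := abs_le.mpr ⟨by linarith, hy.le⟩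
        exact le_mul_of_one_le_left (symPow_nonneg hy')
          (one_le_rpow (one_le_symPow_div_two hP hy') hQP)

/-- Up to the factor `Q / 2`, the difference of the two sides is the derivative of
`(symPow P t / 2) ^ (Q / P) - symPow Q (ρ t) / 2`. -/
lemma mul_antisymPow_le {P Q ρ t : ℝ} (hP : 1 < P) (hQ : Q ≤ 2) (hρ₀ : 0 ≤ ρ) (hρ₁ : ρ ≤ 1)
    (hρ : ρ ^ 2 * (Q - 1) = P - 1) (ht : t ∈ Icc 0 1) :
    ρ * antisymPow (Q - 1) (ρ * t) ≤ (symPow P t / 2) ^ (Q / P - 1) * antisymPow (P - 1) t := by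
  have hPQ := le_of_sq_mul_sub_one_eq hP hρ₀ hρ₁ hρ
  have hQP : 0 ≤ Q / P - 1 := by rw [sub_nonneg, one_le_div (by linarith)]; exact hPQ
  have hM₁ : ∀ y ∈ Ioo (0 : ℝ) 1, 1 ≤ symPow P y / 2 := fun y hy =>
    one_le_symPow_div_two hP.le (abs_le.mpr ⟨by linarith [hy.1], hy.2.le⟩)
  have hmem : ∀ y ∈ Ioo (0 : ℝ) 1, y ∈ Ioo (-1) 1 ∧ ρ * y ∈ Ioo (-1) 1 := fun y hy =>
    ⟨⟨by linarith [hy.1], hy.2⟩, ⟨by nlinarith [mul_nonneg hρ₀ hy.1.le],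
      (mul_le_of_le_one_left hy.1.le hρ₁).trans_lt hy.2⟩⟩
  rw [← sub_nonneg]
  refine nonneg_of_hasDerivAt_nonneg (f := fun y => (symPow P y / 2) ^ (Q / P - 1)
      * antisymPow (P - 1) y - ρ * antisymPow (Q - 1) (ρ * y)) (f' := fun y =>
    P * antisymPow (P - 1) y / 2 * (Q / P - 1) * (symPow P y / 2) ^ (Q / P - 1 - 1)
        * antisymPow (P - 1) y
      + (symPow P y / 2) ^ (Q / P - 1) * ((P - 1) * symPow (P - 1 - 1) y)
      - ρ * ((Q - 1) * symPow (Q - 1 - 1) (ρ * y) * ρ)) ?_ ?_ ?_ (by simp [antisymPow]) ht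
  · refine Continuous.continuousOn ?_
    exact (((continuous_symPow (by linarith)).div_const 2).rpow_const fun _ => .inr hQP).mul
      (continuous_antisymPow (by linarith)) |>.sub (continuous_const.mul
        ((continuous_antisymPow (by linarith)).comp (continuous_const_mul ρ)))
  · intro y hy
    have hlin : HasDerivAt (fun y => ρ * y) ρ y := by simpa using (hasDerivAt_id' y).const_mul ρ
    exact (((hasDerivAt_symPow P (hmem y hy).1).div_const 2).rpow_const
      (.inl (by linarith [hM₁ y hy]))).mul (hasDerivAt_antisymPow (P - 1) (hmem y hy).1)
      |>.sub (((hasDerivAt_antisymPow (Q - 1) (hmem y hy).2).comp y hlin).const_mul ρ)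
  · intro y hy
    have hsq : 0 ≤ P / 2 * (Q / P - 1) * (symPow P y / 2) ^ (Q / P - 1 - 1) :=
      mul_nonneg (by positivity) (rpow_nonneg (by linarith [hM₁ y hy]) _)
    have hρy : ρ * y ≤ y := mul_le_of_le_one_left hy.1.le hρ₁
    have hcomp := symPow_le_rpow_mul_symPow hP.le hPQ hQ (mul_nonneg hρ₀ hy.1.le) hρy hy.2
    rw [show Q - 1 - 1 = Q - 2 by ring, show P - 1 - 1 = P - 2 by ring]
    have hρ' : ρ * ((Q - 1) * symPow (Q - 2) (ρ * y) * ρ) = (P - 1) * symPow (Q - 2) (ρ * y) := by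
      rw [← hρ]; ring
    nlinarith [mul_nonneg hsq (sq_nonneg (antisymPow (P - 1) y))]

theorem symPow_div_two_le_rpow {P Q ρ t : ℝ} (hP : 1 < P) (hQ : Q ≤ 2) (hρ₀ : 0 ≤ ρ)
    (hρ₁ : ρ ≤ 1) (hρ : ρ ^ 2 * (Q - 1) = P - 1) (ht : t ∈ Icc 0 1) :
    symPow Q (ρ * t) / 2 ≤ (symPow P t / 2) ^ (Q / P) := by
  have hPQ := le_of_sq_mul_sub_one_eq hP hρ₀ hρ₁ hρ
  rw [← sub_nonneg]
  refine nonneg_of_hasDerivAt_nonneg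
    (f := fun y => (symPow P y / 2) ^ (Q / P) - symPow Q (ρ * y) / 2) (f' := fun y => Q / 2 *
      ((symPow P y / 2) ^ (Q / P - 1) * antisymPow (P - 1) y - ρ * antisymPow (Q - 1) (ρ * y)))
    ?_ ?_ ?_ (by simp [symPow]) ht
  · refine Continuous.continuousOn ?_
    exact (((continuous_symPow (by linarith)).div_const 2).rpow_const
      fun _ => .inr (div_nonneg (by linarith) (by linarith))).sub
      (((continuous_symPow (by linarith)).comp (continuous_const_mul ρ)).div_const 2)
  · intro y hy
    have hlin : HasDerivAt (fun y => ρ * y) ρ y := by simpa using (hasDerivAt_id' y).const_mul ρ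
    refine ((((hasDerivAt_symPow P ⟨by linarith [hy.1], hy.2⟩).div_const 2).rpow_const
      (.inr (by rw [one_le_div (by linarith)]; exact hPQ))).sub
      (((hasDerivAt_symPow Q ⟨by nlinarith [mul_nonneg hρ₀ hy.1.le],
        (mul_le_of_le_one_left hy.1.le hρ₁).trans_lt hy.2⟩).comp y hlin).div_const
        2)).congr_deriv ?_
    field_simp
  · intro y hy
    exact mul_nonneg (by linarith) (sub_nonneg.mpr
      (mul_antisymPow_le hP hQ hρ₀ hρ₁ hρ (Ioo_subset_Icc_self hy)))

theorem symPow_div_two_rpow_le {P Q ρ t : ℝ} (hP : 1 < P) (hQ : Q ≤ 2) (hρ₀ : 0 ≤ ρ)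
    (hρ₁ : ρ ≤ 1) (hρ : ρ ^ 2 * (Q - 1) = P - 1) (ht : |t| ≤ 1) :
    (symPow Q (ρ * t) / 2) ^ (1 / Q) ≤ (symPow P t / 2) ^ (1 / P) := by
  wlog ht₀ : 0 ≤ t generalizing t
  · simpa [symPow_neg] using this (t := -t) (by rwa [abs_neg]) (by linarith)
  have hQ₁ : 1 < Q := by linarith [le_of_sq_mul_sub_one_eq hP hρ₀ hρ₁ hρ]
  have hρt : |ρ * t| ≤ 1 := by
    rw [abs_mul, abs_of_nonneg hρ₀]; exact mul_le_one₀ hρ₁ (abs_nonneg t) ht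
  calc (symPow Q (ρ * t) / 2) ^ (1 / Q)
      ≤ ((symPow P t / 2) ^ (Q / P)) ^ (1 / Q) :=
        rpow_le_rpow (by linarith [one_le_symPow_div_two hQ₁.le hρt])
          (symPow_div_two_le_rpow hP hQ hρ₀ hρ₁ hρ ⟨ht₀, (abs_le.mp ht).2⟩) (by positivity)
    _ = (symPow P t / 2) ^ (1 / P) := by
        rw [← rpow_mul (by linarith [one_le_symPow_div_two hP.le ht])]
        congr 1
        field_simp

theorem one_add_mul_le_symPow_rpow_mul {r s α β : ℝ} (hrs : r.HolderConjugate s)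
    (hα : |α| ≤ 1) (hβ : |β| ≤ 1) :
    1 + α * β ≤ (symPow r α / 2) ^ (1 / r) * (symPow s β / 2) ^ (1 / s) := by
  obtain ⟨hα₁, hα₂⟩ := abs_le.mp hα
  obtain ⟨hβ₁, hβ₂⟩ := abs_le.mp hβ
  have hholder := inner_le_Lp_mul_Lq_of_nonneg Finset.univ hrs
    (f := fun b : Bool => if b then 1 + α else 1 - α)
    (g := fun b : Bool => if b then 1 + β else 1 - β)
    (fun b _ => by cases b <;> simp only [Bool.false_eq_true, ↓reduceIte] <;> linarith)
    (fun b _ => by cases b <;> simp only [Bool.false_eq_true, ↓reduceIte] <;> linarith)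
  simp only [Fintype.sum_bool, if_true, Bool.false_eq_true, if_false] at hholder
  have htwo : (2 : ℝ) ^ (1 / r) * 2 ^ (1 / s) = 2 := by
    rw [← rpow_add two_pos, one_div, one_div, hrs.inv_add_inv_eq_one, rpow_one]
  have hnorm : ∀ u γ : ℝ, |γ| ≤ 1 →
      ((1 + γ) ^ u + (1 - γ) ^ u) ^ (1 / u) = 2 ^ (1 / u) * (symPow u γ / 2) ^ (1 / u) :=
    fun u γ hγ => by
      rw [← mul_rpow zero_le_two (div_nonneg (symPow_nonneg hγ) zero_le_two),
        mul_div_cancel₀ _ two_ne_zero, symPow]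
  rw [hnorm r α hα, hnorm s β hβ] at hholder
  calc 1 + α * β = ((1 + α) * (1 + β) + (1 - α) * (1 - β)) / 2 := by ring
    _ ≤ 2 ^ (1 / r) * (symPow r α / 2) ^ (1 / r) * (2 ^ (1 / s) * (symPow s β / 2) ^ (1 / s)) / 2 :=
        by gcongr
    _ = (symPow r α / 2) ^ (1 / r) * (symPow s β / 2) ^ (1 / s) := by
        rw [mul_mul_mul_comm, htwo]
        ring

lemma exists_eq_mul_one_add_and_eq_mul_one_sub {a b : ℝ} (ha : 0 ≤ a) (hb : 0 ≤ b) :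
    ∃ s δ : ℝ, 0 ≤ s ∧ |δ| ≤ 1 ∧ a = s * (1 + δ) ∧ b = s * (1 - δ) := by
  rcases (add_nonneg ha hb).eq_or_lt with hab | hab
  · exact ⟨0, 0, le_rfl, by simp, by linarith, by linarith⟩
  · refine ⟨(a + b) / 2, (a - b) / (a + b), by positivity, ?_, ?_, ?_⟩
    · rw [abs_div, abs_of_pos hab, div_le_one hab, abs_le]
      constructor <;> linarith
    · field_simp
      ring
    · field_simp
      ring

lemma powMean_mul_one_add_one_sub {p s δ : ℝ} (hp : p ≠ 0) (hs : 0 ≤ s) (hδ : |δ| ≤ 1) :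
    (((s * (1 + δ)) ^ p + (s * (1 - δ)) ^ p) / 2) ^ (1 / p) = s * (symPow p δ / 2) ^ (1 / p) := by
  obtain ⟨hδ₁, hδ₂⟩ := abs_le.mp hδ
  rw [mul_rpow hs (by linarith), mul_rpow hs (by linarith), ← mul_add, mul_div_assoc, ← symPow,
    mul_rpow (rpow_nonneg hs p) (div_nonneg (symPow_nonneg (b := p) hδ) zero_le_two), one_div,
    rpow_rpow_inv hs hp]

theorem one_add_mul_mul_le_symPow_rpow_mul {σ p q δ ε : ℝ} (hp : 1 < p) (hq : 1 < q)
    (hσ₀ : 0 ≤ σ) (hσ₁ : σ ≤ 1) (hpq : (p - 1) * (q - 1) = σ ^ 2) (hδ : |δ| ≤ 1) (hε : |ε| ≤ 1) :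
    1 + σ * δ * ε ≤ (symPow p δ / 2) ^ (1 / p) * (symPow q ε / 2) ^ (1 / q) := by
  wlog hle : p ≤ q generalizing p q δ ε
  · rw [mul_right_comm, mul_comm ((symPow p δ / 2) ^ (1 / p))]
    exact this hq hp (by rw [mul_comm, hpq]) hε hδ (le_of_not_ge hle)
  rcases le_total q 2 with hq₂ | hq₂
  · -- both exponents are at most `2`: factor through `L²`, since `√(p-1) √(q-1) = σ`
    have hL2 : ∀ {r t : ℝ}, 1 < r → r ≤ 2 → |t| ≤ 1 →
        |√(r - 1) * t| ≤ 1 ∧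
          (symPow 2 (√(r - 1) * t) / 2) ^ (1 / 2 : ℝ) ≤ (symPow r t / 2) ^ (1 / r) :=
      fun {r t} hr hr₂ ht => by
        have hρ₁ : √(r - 1) ≤ 1 := sqrt_le_one.mpr (by linarith)
        refine ⟨?_, symPow_div_two_rpow_le hr le_rfl (sqrt_nonneg _) hρ₁
          (by rw [sq_sqrt (by linarith)]; ring) ht⟩
        rw [abs_mul, abs_of_nonneg (sqrt_nonneg _)]
        exact mul_le_one₀ hρ₁ (abs_nonneg t) ht
    obtain ⟨hαδ, hpδ⟩ := hL2 hp (hle.trans hq₂) hδ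
    obtain ⟨hβε, hqε⟩ := hL2 hq hq₂ hε
    calc 1 + σ * δ * ε = 1 + √(p - 1) * δ * (√(q - 1) * ε) := by
          rw [← sqrt_mul_self hσ₀, ← sq, ← hpq, sqrt_mul (by linarith)]; ring
      _ ≤ (symPow 2 (√(p - 1) * δ) / 2) ^ (1 / 2 : ℝ)
            * (symPow 2 (√(q - 1) * ε) / 2) ^ (1 / 2 : ℝ) :=
          one_add_mul_le_symPow_rpow_mul .two_two hαδ hβε
      _ ≤ (symPow p δ / 2) ^ (1 / p) * (symPow q ε / 2) ^ (1 / q) :=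
          mul_le_mul hpδ hqε (rpow_nonneg (div_nonneg (symPow_nonneg hβε) zero_le_two) _)
            (rpow_nonneg (div_nonneg (symPow_nonneg hδ) zero_le_two) _)
  · -- Hölder with the conjugate exponent `q' ≤ 2` of `q`
    set q' := conjExponent q with hq'
    have hconj : q'.HolderConjugate q := (HolderConjugate.conjExponent hq).symm
    have hq'₂ : q' ≤ 2 := by
      rw [hq', conjExponent, div_le_iff₀ (by linarith)]; linarith
    have hσq' : σ ^ 2 * (q' - 1) = p - 1 := by
      rw [hq', conjExponent, ← hpq]
      field_simp [(by linarith : q - 1 ≠ 0)]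
      ring
    have hσδ : |σ * δ| ≤ 1 := by
      rw [abs_mul, abs_of_nonneg hσ₀]; exact mul_le_one₀ hσ₁ (abs_nonneg δ) hδ
    calc 1 + σ * δ * ε ≤ (symPow q' (σ * δ) / 2) ^ (1 / q') * (symPow q ε / 2) ^ (1 / q) :=
          one_add_mul_le_symPow_rpow_mul hconj hσδ hε
      _ ≤ (symPow p δ / 2) ^ (1 / p) * (symPow q ε / 2) ^ (1 / q) :=
          mul_le_mul_of_nonneg_right (symPow_div_two_rpow_le hp hq'₂ hσ₀ hσ₁ hσq' hδ)
            (rpow_nonneg (div_nonneg (symPow_nonneg hε) zero_le_two) _)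

theorem bool_noise_bilinear_le {σ p q : ℝ} (hp : 1 < p) (hq : 1 < q) (hσ₀ : 0 ≤ σ) (hσ₁ : σ ≤ 1)
    (hpq : (p - 1) * (q - 1) = σ ^ 2) {F G : Bool → ℝ} (hF : ∀ b, 0 ≤ F b) (hG : ∀ b, 0 ≤ G b) :
    (∑ b, ((1 + σ) / 2 * (F b * G b) + (1 - σ) / 2 * (F (!b) * G b))) / 2
      ≤ ((∑ b, F b ^ p) / 2) ^ (1 / p) * ((∑ b, G b ^ q) / 2) ^ (1 / q) := by
  obtain ⟨s, δ, hs, hδ, hF₁, hF₀⟩ := exists_eq_mul_one_add_and_eq_mul_one_sub (hF true) (hF false)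
  obtain ⟨r, ε, hr, hε, hG₁, hG₀⟩ := exists_eq_mul_one_add_and_eq_mul_one_sub (hG true) (hG false)
  simp only [Fintype.sum_bool, Bool.not_true, Bool.not_false, hF₁, hF₀, hG₁, hG₀]
  rw [powMean_mul_one_add_one_sub (by linarith) hs hδ,
    powMean_mul_one_add_one_sub (by linarith) hr hε]
  calc _ = s * r * (1 + σ * δ * ε) := by ring
    _ ≤ s * r * ((symPow p δ / 2) ^ (1 / p) * (symPow q ε / 2) ^ (1 / q)) :=
        mul_le_mul_of_nonneg_left
          (one_add_mul_mul_le_symPow_rpow_mul hp hq hσ₀ hσ₁ hpq hδ hε) (mul_nonneg hs hr)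
    _ = _ := by ring

def slice {d : ℕ} (f : (Fin (d + 1) → Bool) → ℝ) (b : Bool) : (Fin d → Bool) → ℝ :=
  fun z => f (Fin.cons b z)

lemma sum_cube_succ {d : ℕ} (F : (Fin (d + 1) → Bool) → ℝ) :
    ∑ x, F x = ∑ b, ∑ z, slice F b z := by
  rw [← (Fin.consEquiv fun _ => Bool).sum_comp, Fintype.sum_prod_type]
  rfl

lemma hExp_zero (F : (Fin 0 → Bool) → ℝ) (x : Fin 0 → Bool) : hExp 0 F = F x := by
  simp [hExp, Subsingleton.elim _ x]

lemma hExp_succ {d : ℕ} (F : (Fin (d + 1) → Bool) → ℝ) :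
    hExp (d + 1) F = (∑ b, hExp d (slice F b)) / 2 := by
  simp only [hExp, sum_cube_succ, ← Finset.sum_div, pow_succ, div_div]

lemma hExp_nonneg {d : ℕ} {F : (Fin d → Bool) → ℝ} (hF : ∀ x, 0 ≤ F x) : 0 ≤ hExp d F :=
  div_nonneg (Finset.sum_nonneg fun x _ => hF x) (by positivity)

lemma hNorm_nonneg (d : ℕ) (p : ℝ) (f : (Fin d → Bool) → ℝ) : 0 ≤ hNorm d p f :=
  rpow_nonneg (hExp_nonneg fun _ => rpow_nonneg (abs_nonneg _) _) _

lemma hNorm_rpow {d : ℕ} {p : ℝ} (hp : p ≠ 0) (f : (Fin d → Bool) → ℝ) :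
    hNorm d p f ^ p = hExp d (fun x => |f x| ^ p) := by
  rw [hNorm, one_div, rpow_inv_rpow (hExp_nonneg fun _ => rpow_nonneg (abs_nonneg _) _) hp]

lemma hNorm_zero {p : ℝ} (hp : p ≠ 0) (f : (Fin 0 → Bool) → ℝ) (x : Fin 0 → Bool) :
    hNorm 0 p f = |f x| := by
  rw [hNorm, hExp_zero _ x, one_div, rpow_rpow_inv (abs_nonneg _) hp]

lemma hNorm_succ {d : ℕ} {p : ℝ} (hp : p ≠ 0) (f : (Fin (d + 1) → Bool) → ℝ) :
    hNorm (d + 1) p f = ((∑ b, hNorm d p (slice f b) ^ p) / 2) ^ (1 / p) := by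
  simp only [hNorm_rpow hp]
  rw [hNorm, hExp_succ]
  rfl

lemma Tnoise_zero (σ : ℝ) (f : (Fin 0 → Bool) → ℝ) : Tnoise σ f = f := by
  ext x
  simp [Tnoise, noiseW, Subsingleton.elim _ x]

lemma noiseW_cons (σ : ℝ) {d : ℕ} (b' b : Bool) (y x : Fin d → Bool) :
    noiseW σ (Fin.cons b' y) (Fin.cons b x)
      = (if b' = b then (1 + σ) / 2 else (1 - σ) / 2) * noiseW σ y x := by
  simp only [noiseW, Fin.prod_univ_succ, Fin.cons_zero, Fin.cons_succ]

lemma Tnoise_cons (σ : ℝ) {d : ℕ} (f : (Fin (d + 1) → Bool) → ℝ) (b : Bool) (x : Fin d → Bool) :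
    Tnoise σ f (Fin.cons b x)
      = (1 + σ) / 2 * Tnoise σ (slice f b) x + (1 - σ) / 2 * Tnoise σ (slice f (!b)) x := by
  simp only [Tnoise, sum_cube_succ, slice, noiseW_cons, mul_assoc, ← Finset.mul_sum]
  cases b <;> simp [add_comm]

lemma hExp_Tnoise_mul_succ (σ : ℝ) {d : ℕ} (f g : (Fin (d + 1) → Bool) → ℝ) :
    hExp (d + 1) (fun x => Tnoise σ f x * g x)
      = (∑ b, ((1 + σ) / 2 * hExp d (fun x => Tnoise σ (slice f b) x * slice g b x)
          + (1 - σ) / 2 * hExp d (fun x => Tnoise σ (slice f (!b)) x * slice g b x))) / 2 := by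
  rw [hExp_succ]
  congr 1
  refine Finset.sum_congr rfl fun b _ => ?_
  simp only [hExp, slice, Tnoise_cons, add_mul, mul_assoc, Finset.sum_add_distrib,
    ← Finset.mul_sum, add_div, mul_div_assoc]

theorem stmt10 (d : ℕ) (σ p q : ℝ) (hσ0 : 0 < σ) (hσ1 : σ < 1)
    (hp : 1 ≤ p) (hq : 1 ≤ q) (hpq : (p - 1) * (q - 1) = σ ^ 2)
    (f g : (Fin d → Bool) → ℝ) :
    hExp d (fun x => Tnoise σ f x * g x) ≤ hNorm d p f * hNorm d q g := by
  have hp₁ : 1 < p := by nlinarith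
  have hq₁ : 1 < q := by nlinarith
  induction d with
  | zero =>
    rw [Tnoise_zero, hExp_zero _ default, hNorm_zero (by linarith) _ default,
      hNorm_zero (by linarith) _ default, ← abs_mul]
    exact le_abs_self _
  | succ d ih =>
    rw [hExp_Tnoise_mul_succ, hNorm_succ (by linarith), hNorm_succ (by linarith)]
    calc _ ≤ (∑ b, ((1 + σ) / 2 * (hNorm d p (slice f b) * hNorm d q (slice g b))
          + (1 - σ) / 2 * (hNorm d p (slice f (!b)) * hNorm d q (slice g b)))) / 2 := by
          gcongr <;> exact ih _ _
      _ ≤ _ := bool_noise_bilinear_le hp₁ hq₁ hσ0.le hσ1.le hpq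
          (fun _ => hNorm_nonneg _ _ _) (fun _ => hNorm_nonneg _ _ _)
end

section
/- (Robust expansion lower bound for the hypercube.) Fix σ ∈ (0,1), γ ∈ [0,1], m ≥ 1, and p, q ∈ [1,∞) with (p-1)(q-1) = σ². Define the robust expansion Φ_r(1/m, γ) as the minimum over sets A with μ(A) ≤ 1/m and sets B with Pr[x ∈ B ∣ y ∈ A] ≥ γ of the ratio μ(B)/μ(A), where x is uniform on {-1,1}^d, y ∼ N_σ(x), and μ is the uniform measure. Then Φ_r(1/m, γ) ≥ γ^q · m^{1 + q/p - q}. -/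
/-- Indicator function of a finite set of points of the hypercube. -/
noncomputable def chi {d : ℕ} (A : Finset (Fin d → Bool)) : (Fin d → Bool) → ℝ :=
  fun x => if x ∈ A then 1 else 0

/-!
Hypercontractivity of the noise operator in bilinear form, `𝔼[T_σ f · g] ≤ ‖f‖_p ‖g‖_q` for
nonnegative `f, g` when `(p - 1)(q - 1) = σ²`, applied to `f = 1_A` and `g = 1_B`, gives
`γ μ(A) ≤ μ(A)^{1/p} μ(B)^{1/q}`; raising this to the power `q` and using `m ≤ 1/μ(A)` with the
exponent `1 + q/p - q = (1 - σ²)/p ≥ 0` yields the bound.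

The bilinear inequality tensorises over the coordinates, so it suffices to prove it on a single
bit, where after scaling it reads `1 + σuv ≤ ‖1 + u x‖_p ‖1 + v x‖_q` for a uniform sign `x`.
Hölder's inequality, with exponents `(2, 2)` if `p, q ≤ 2` and `(q', q)` if `q ≥ 2`, reduces this
to the two-point inequality `‖1 + ρ t x‖_P ≤ ‖1 + t x‖_p` for `p - 1 = ρ²(P - 1)` and
`1 < p ≤ P ≤ 2`, which follows from Bernoulli's inequality and two derivative comparisons in `t`.
-/

open Real Set

namespace Hypercube

lemma monotoneOn_Icc_of_hasDerivAt_nonneg {f f' : ℝ → ℝ} {a b : ℝ}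
    (hf : ContinuousOn f (Icc a b)) (hf' : ∀ s ∈ Ioo a b, HasDerivAt f (f' s) s)
    (hf'₀ : ∀ s ∈ Ioo a b, 0 ≤ f' s) : MonotoneOn f (Icc a b) := by
  refine monotoneOn_of_hasDerivWithinAt_nonneg (f' := f') (convex_Icc a b) hf ?_ ?_ <;>
    rw [interior_Icc]
  · exact fun s hs => (hf' s hs).hasDerivWithinAt
  · exact hf'₀

/-- `evenPow r t = 𝔼 (1 + t x) ^ r` and `oddPow r t = 𝔼 x (1 + t x) ^ r` for a uniform sign `x`. -/
noncomputable def evenPow (r t : ℝ) : ℝ := ((1 + t) ^ r + (1 - t) ^ r) / 2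

noncomputable def oddPow (r t : ℝ) : ℝ := ((1 + t) ^ r - (1 - t) ^ r) / 2

lemma continuous_evenPow {r : ℝ} (hr : 0 ≤ r) : Continuous (evenPow r) := by
  unfold evenPow; fun_prop (disch := assumption)

lemma continuous_oddPow {r : ℝ} (hr : 0 ≤ r) : Continuous (oddPow r) := by
  unfold oddPow; fun_prop (disch := assumption)

lemma hasDerivAt_evenPow (r : ℝ) {t : ℝ} (ht : |t| < 1) :
    HasDerivAt (evenPow r) (r * oddPow (r - 1) t) t := by
  obtain ⟨h₁, h₂⟩ := abs_lt.1 ht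
  have hp := ((hasDerivAt_id t).const_add 1).rpow_const (p := r) (Or.inl (by simp; linarith))
  have hm := ((hasDerivAt_id t).const_sub 1).rpow_const (p := r) (Or.inl (by simp; linarith))
  exact ((hp.add hm).div_const 2).congr_deriv (by simp only [oddPow, id]; ring)

lemma hasDerivAt_oddPow (r : ℝ) {t : ℝ} (ht : |t| < 1) :
    HasDerivAt (oddPow r) (r * evenPow (r - 1) t) t := by
  obtain ⟨h₁, h₂⟩ := abs_lt.1 ht
  have hp := ((hasDerivAt_id t).const_add 1).rpow_const (p := r) (Or.inl (by simp; linarith))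
  have hm := ((hasDerivAt_id t).const_sub 1).rpow_const (p := r) (Or.inl (by simp; linarith))
  exact ((hp.sub hm).div_const 2).congr_deriv (by simp only [evenPow, id]; ring)

lemma one_le_evenPow {r t : ℝ} (hr : 1 ≤ r) (ht : |t| ≤ 1) : 1 ≤ evenPow r t := by
  obtain ⟨h₁, h₂⟩ := abs_le.1 ht
  have hp := one_add_mul_self_le_rpow_one_add (s := t) (by linarith) hr
  have hm := one_add_mul_self_le_rpow_one_add (s := -t) (by linarith) hr
  rw [← sub_eq_add_neg] at hm
  unfold evenPow
  linarith

lemma evenPow_monotoneOn {r : ℝ} (hr : r ≤ 0) : MonotoneOn (evenPow r) (Ico 0 1) := by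
  have hderiv : ∀ s ∈ Ico (0:ℝ) 1, HasDerivAt (evenPow r) (r * oddPow (r - 1) s) s :=
    fun s hs => hasDerivAt_evenPow r (abs_lt.2 ⟨by linarith [hs.1], hs.2⟩)
  refine monotoneOn_of_hasDerivWithinAt_nonneg (convex_Ico 0 1)
    (fun s hs => (hderiv s hs).continuousAt.continuousWithinAt)
    (fun s hs => (hderiv s (interior_subset hs)).hasDerivWithinAt) fun s hs => ?_
  obtain ⟨hs₀, hs₁⟩ := interior_subset hs
  have : (1 + s) ^ (r - 1) ≤ (1 - s) ^ (r - 1) :=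
    rpow_le_rpow_of_nonpos (by linarith) (by linarith) (by linarith)
  exact mul_nonneg_of_nonpos_of_nonpos hr (by unfold oddPow; linarith)

lemma evenPow_antitone_exponent {r r' t : ℝ} (hr : r' ≤ r) (hr₀ : r ≤ 0) (ht₀ : 0 ≤ t)
    (ht₁ : t < 1) : evenPow r t ≤ evenPow r' t := by
  have ha : 0 < 1 + t := by linarith
  have hb : 0 < 1 - t := by linarith
  have hx : (1 + t) ^ (r' - r) ≤ 1 := rpow_le_one_of_one_le_of_nonpos (by linarith) (by linarith)
  have hy : 1 ≤ (1 - t) ^ (r' - r) :=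
    one_le_rpow_of_pos_of_le_one_of_nonpos hb (by linarith) (by linarith)
  have hxy : 1 ≤ (1 + t) ^ (r' - r) * (1 - t) ^ (r' - r) := by
    rw [← mul_rpow ha.le hb.le]
    exact one_le_rpow_of_pos_of_le_one_of_nonpos (by positivity) (by nlinarith) (by linarith)
  have hsum : 2 ≤ (1 + t) ^ (r' - r) + (1 - t) ^ (r' - r) := by
    nlinarith [sq_nonneg ((1 + t) ^ (r' - r) - (1 - t) ^ (r' - r))]
  have hu : (1 + t) ^ r ≤ 1 := rpow_le_one_of_one_le_of_nonpos (by linarith) hr₀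
  have hv : 1 ≤ (1 - t) ^ r := one_le_rpow_of_pos_of_le_one_of_nonpos hb (by linarith) hr₀
  have hsplit : ∀ a : ℝ, 0 < a → a ^ r' = a ^ r * a ^ (r' - r) := fun a ha => by
    rw [← rpow_add ha]; ring_nf
  unfold evenPow
  rw [hsplit _ ha, hsplit _ hb]
  nlinarith

lemma mul_oddPow_mul_le_oddPow {p P ρ t : ℝ} (hp : 1 < p) (hP : P ≤ 2) (hρ₀ : 0 ≤ ρ)
    (hρ₁ : ρ ≤ 1) (hrel : p - 1 = ρ ^ 2 * (P - 1)) (ht : t ∈ Icc (0:ℝ) 1) :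
    ρ * oddPow (P - 1) (ρ * t) ≤ oddPow (p - 1) t := by
  have hP₁ : 0 < P - 1 := pos_of_mul_pos_right (hrel ▸ sub_pos.2 hp) (sq_nonneg ρ)
  have hpP : p ≤ P := by nlinarith [pow_le_one₀ hρ₀ hρ₁ (n := 2)]
  have hderiv : ∀ s ∈ Ioo (0:ℝ) 1,
      HasDerivAt (fun s => oddPow (p - 1) s - ρ * oddPow (P - 1) (ρ * s))
        ((p - 1) * (evenPow (p - 1 - 1) s - evenPow (P - 1 - 1) (ρ * s))) s := by
    intro s ⟨hs₀, hs₁⟩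
    have hρs : |ρ * s| < 1 := by rw [abs_of_nonneg (by positivity)]; nlinarith
    have h₁ := hasDerivAt_oddPow (p - 1) (abs_lt.2 ⟨by linarith, hs₁⟩)
    have h₂ := (hasDerivAt_oddPow (P - 1) hρs).comp s ((hasDerivAt_id s).const_mul ρ)
    exact (h₁.sub (h₂.const_mul ρ)).congr_deriv (by rw [hrel]; ring)
  have hcont : Continuous fun s => oddPow (p - 1) s - ρ * oddPow (P - 1) (ρ * s) :=
    (continuous_oddPow (by linarith)).sub (continuous_const.mul
      ((continuous_oddPow (by linarith)).comp (continuous_const.mul continuous_id)))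
  have hmono := monotoneOn_Icc_of_hasDerivAt_nonneg hcont.continuousOn hderiv
    (fun s ⟨hs₀, hs₁⟩ => mul_nonneg (by linarith) (sub_nonneg.2 <|
      calc evenPow (P - 1 - 1) (ρ * s)
          ≤ evenPow (P - 1 - 1) s := evenPow_monotoneOn (by linarith)
            ⟨by positivity, by nlinarith⟩ ⟨hs₀.le, hs₁⟩ (by nlinarith)
        _ ≤ evenPow (p - 1 - 1) s :=
            evenPow_antitone_exponent (by linarith) (by linarith) hs₀.le hs₁))
    ⟨le_rfl, zero_le_one⟩ ht ht.1
  simpa [oddPow] using hmono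

lemma evenPow_mul_le {p P ρ t : ℝ} (hp : 1 < p) (hP : P ≤ 2) (hρ₀ : 0 ≤ ρ) (hρ₁ : ρ ≤ 1)
    (hrel : p - 1 = ρ ^ 2 * (P - 1)) (ht : t ∈ Icc (0:ℝ) 1) :
    evenPow P (ρ * t) ≤ 1 + P / p * (evenPow p t - 1) := by
  have hP₁ : 0 < P - 1 := pos_of_mul_pos_right (hrel ▸ sub_pos.2 hp) (sq_nonneg ρ)
  have hderiv : ∀ s ∈ Ioo (0:ℝ) 1,
      HasDerivAt (fun s => 1 + P / p * (evenPow p s - 1) - evenPow P (ρ * s))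
        (P * (oddPow (p - 1) s - ρ * oddPow (P - 1) (ρ * s))) s := by
    intro s ⟨hs₀, hs₁⟩
    have hρs : |ρ * s| < 1 := by rw [abs_of_nonneg (by positivity)]; nlinarith
    have h₁ := hasDerivAt_evenPow p (abs_lt.2 ⟨by linarith, hs₁⟩)
    have h₂ := (hasDerivAt_evenPow P hρs).comp s ((hasDerivAt_id s).const_mul ρ)
    refine (((h₁.sub_const 1).const_mul (P / p)).const_add 1 |>.sub h₂).congr_deriv ?_
    field_simp
  have hcont : Continuous fun s => 1 + P / p * (evenPow p s - 1) - evenPow P (ρ * s) :=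
    (continuous_const.add (continuous_const.mul
      ((continuous_evenPow (by linarith)).sub continuous_const))).sub
      ((continuous_evenPow (by linarith)).comp (continuous_const.mul continuous_id))
  have hmono := monotoneOn_Icc_of_hasDerivAt_nonneg hcont.continuousOn hderiv
    (fun s hs => mul_nonneg (by linarith) (sub_nonneg.2 <|
      mul_oddPow_mul_le_oddPow hp hP hρ₀ hρ₁ hrel (Ioo_subset_Icc_self hs)))
    ⟨le_rfl, zero_le_one⟩ ht ht.1
  simpa [evenPow] using hmono

noncomputable def twoPointNorm (p a b : ℝ) : ℝ := ((a ^ p + b ^ p) / 2) ^ (1 / p)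

lemma twoPointNorm_comm (p a b : ℝ) : twoPointNorm p a b = twoPointNorm p b a := by
  rw [twoPointNorm, add_comm, twoPointNorm]

lemma twoPointNorm_nonneg (p : ℝ) {a b : ℝ} (ha : 0 ≤ a) (hb : 0 ≤ b) :
    0 ≤ twoPointNorm p a b := by
  unfold twoPointNorm; have := rpow_nonneg ha p; have := rpow_nonneg hb p; positivity

lemma twoPointNorm_one_add_one_sub_nonneg (p : ℝ) {t : ℝ} (ht : |t| ≤ 1) :
    0 ≤ twoPointNorm p (1 + t) (1 - t) :=
  twoPointNorm_nonneg p (by linarith [(abs_le.1 ht).1]) (by linarith [(abs_le.1 ht).2])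

lemma twoPointNorm_mul {p A a b : ℝ} (hp : p ≠ 0) (hA : 0 ≤ A) (ha : 0 ≤ a) (hb : 0 ≤ b) :
    twoPointNorm p (A * a) (A * b) = A * twoPointNorm p a b := by
  have hab : 0 ≤ (a ^ p + b ^ p) / 2 := by
    have := rpow_nonneg ha p; have := rpow_nonneg hb p; positivity
  unfold twoPointNorm
  rw [mul_rpow hA ha, mul_rpow hA hb, ← mul_add, mul_div_assoc, mul_rpow (rpow_nonneg hA p) hab,
    ← rpow_mul hA, mul_one_div_cancel hp, rpow_one]

lemma twoPointNorm_hypercontractive {p P ρ t : ℝ} (hp : 1 < p) (hP : P ≤ 2) (hρ₀ : 0 ≤ ρ)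
    (hρ₁ : ρ ≤ 1) (hrel : p - 1 = ρ ^ 2 * (P - 1)) (ht : |t| ≤ 1) :
    twoPointNorm P (1 + ρ * t) (1 - ρ * t) ≤ twoPointNorm p (1 + t) (1 - t) := by
  wlog ht₀ : 0 ≤ t generalizing t
  · have := this (t := -t) (by rwa [abs_neg]) (by linarith)
    rw [twoPointNorm_comm, twoPointNorm_comm p]
    convert this using 2 <;> ring
  have hP₁ : 0 < P - 1 := pos_of_mul_pos_right (hrel ▸ sub_pos.2 hp) (sq_nonneg ρ)
  have hpP : p ≤ P := by nlinarith [pow_le_one₀ hρ₀ hρ₁ (n := 2)]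
  have hP₀ : 0 < P := by linarith
  have hρt : |ρ * t| ≤ 1 := by
    rw [abs_mul, abs_of_nonneg hρ₀]; exact mul_le_one₀ hρ₁ (abs_nonneg t) ht
  have hE := one_le_evenPow hp.le ht
  have hbernoulli : 1 + P / p * (evenPow p t - 1) ≤ evenPow p t ^ (P / p) := by
    simpa using one_add_mul_self_le_rpow_one_add (s := evenPow p t - 1) (by linarith)
      ((one_le_div (by linarith)).2 hpP)
  calc evenPow P (ρ * t) ^ (1 / P)
      ≤ (evenPow p t ^ (P / p)) ^ (1 / P) := by
        refine rpow_le_rpow ?_ ?_ (by positivity)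
        · linarith [one_le_evenPow (by linarith : 1 ≤ P) hρt]
        · exact (evenPow_mul_le hp hP hρ₀ hρ₁ hrel ⟨ht₀, (abs_le.1 ht).2⟩).trans hbernoulli
    _ = evenPow p t ^ (1 / p) := by
        rw [← rpow_mul (by linarith)]; congr 1; field_simp

lemma twoPoint_holder {P Q : ℝ} (hPQ : P.HolderConjugate Q) {a₀ a₁ b₀ b₁ : ℝ} (ha₀ : 0 ≤ a₀)
    (ha₁ : 0 ≤ a₁) (hb₀ : 0 ≤ b₀) (hb₁ : 0 ≤ b₁) :
    (a₀ * b₀ + a₁ * b₁) / 2 ≤ twoPointNorm P a₀ a₁ * twoPointNorm Q b₀ b₁ := by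
  have holder := inner_le_Lp_mul_Lq_of_nonneg Finset.univ hPQ (f := ![a₀, a₁]) (g := ![b₀, b₁])
    (by simp [Fin.forall_fin_two, ha₀, ha₁]) (by simp [Fin.forall_fin_two, hb₀, hb₁])
  simp only [Fin.sum_univ_two, Matrix.cons_val_zero, Matrix.cons_val_one] at holder
  have htwo : (2:ℝ) ^ (1 / P) * 2 ^ (1 / Q) = 2 := by
    rw [← rpow_add two_pos, hPQ.one_div_add_one_div, div_one, rpow_one]
  unfold twoPointNorm
  rw [div_rpow (by positivity) zero_le_two, div_rpow (by positivity) zero_le_two,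
    div_mul_div_comm, htwo]
  exact div_le_div_of_nonneg_right holder zero_le_two

lemma one_add_mul_le_twoPointNorm_mul {P Q s t : ℝ} (hPQ : P.HolderConjugate Q) (hs : |s| ≤ 1)
    (ht : |t| ≤ 1) :
    1 + s * t ≤ twoPointNorm P (1 + s) (1 - s) * twoPointNorm Q (1 + t) (1 - t) := by
  obtain ⟨hs₁, hs₂⟩ := abs_le.1 hs
  obtain ⟨ht₁, ht₂⟩ := abs_le.1 ht
  calc 1 + s * t = ((1 + s) * (1 + t) + (1 - s) * (1 - t)) / 2 := by ring
    _ ≤ _ := twoPoint_holder hPQ (by linarith) (by linarith) (by linarith) (by linarith)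

lemma one_add_mul_mul_le_of_le_two {p q σ u v : ℝ} (hp : 1 < p) (hp₂ : p ≤ 2) (hq : 1 < q)
    (hq₂ : q ≤ 2) (hσ : 0 ≤ σ) (hpq : (p - 1) * (q - 1) = σ ^ 2) (hu : |u| ≤ 1) (hv : |v| ≤ 1) :
    1 + σ * u * v ≤ twoPointNorm p (1 + u) (1 - u) * twoPointNorm q (1 + v) (1 - v) := by
  have hrel : ∀ r, 1 < r → r - 1 = √(r - 1) ^ 2 * (2 - 1) := fun r hr => by
    rw [sq_sqrt (by linarith)]; ring
  have hsqrt : ∀ r, r ≤ 2 → ∀ t, |t| ≤ 1 → |√(r - 1) * t| ≤ 1 := fun r hr t ht => by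
    rw [abs_mul, abs_of_nonneg (sqrt_nonneg _)]
    exact mul_le_one₀ (sqrt_le_one.2 (by linarith)) (abs_nonneg t) ht
  calc 1 + σ * u * v = 1 + (√(p - 1) * u) * (√(q - 1) * v) := by
        rw [← sqrt_sq hσ, ← hpq, sqrt_mul (by linarith)]; ring
    _ ≤ twoPointNorm 2 (1 + √(p - 1) * u) (1 - √(p - 1) * u)
          * twoPointNorm 2 (1 + √(q - 1) * v) (1 - √(q - 1) * v) :=
        one_add_mul_le_twoPointNorm_mul .two_two (hsqrt p hp₂ u hu) (hsqrt q hq₂ v hv)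
    _ ≤ _ := by
        gcongr
        · exact twoPointNorm_one_add_one_sub_nonneg 2 (hsqrt q hq₂ v hv)
        · exact twoPointNorm_one_add_one_sub_nonneg p hu
        · exact twoPointNorm_hypercontractive hp le_rfl (sqrt_nonneg _)
            (sqrt_le_one.2 (by linarith)) (hrel p hp) hu
        · exact twoPointNorm_hypercontractive hq le_rfl (sqrt_nonneg _)
            (sqrt_le_one.2 (by linarith)) (hrel q hq) hv

lemma one_add_mul_mul_le_of_two_le {p q σ u v : ℝ} (hp : 1 < p) (hq : 2 ≤ q) (hσ₀ : 0 ≤ σ)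
    (hσ₁ : σ ≤ 1) (hpq : (p - 1) * (q - 1) = σ ^ 2) (hu : |u| ≤ 1) (hv : |v| ≤ 1) :
    1 + σ * u * v ≤ twoPointNorm p (1 + u) (1 - u) * twoPointNorm q (1 + v) (1 - v) := by
  have hq' := Real.HolderConjugate.conjExponent (by linarith : 1 < q)
  have hq'₂ : q.conjExponent ≤ 2 := by
    rw [conjExponent, div_le_iff₀ (by linarith)]; linarith
  have hrel : p - 1 = σ ^ 2 * (q.conjExponent - 1) := by
    have : q - 1 ≠ 0 := by linarith
    rw [conjExponent, ← hpq]; field_simp; ring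
  have hσu : |σ * u| ≤ 1 := by
    rw [abs_mul, abs_of_nonneg hσ₀]; exact mul_le_one₀ hσ₁ (abs_nonneg u) hu
  calc 1 + σ * u * v = 1 + (σ * u) * v := by ring
    _ ≤ twoPointNorm q.conjExponent (1 + σ * u) (1 - σ * u) * twoPointNorm q (1 + v) (1 - v) :=
        one_add_mul_le_twoPointNorm_mul hq'.symm hσu hv
    _ ≤ _ := by
        gcongr
        · exact twoPointNorm_one_add_one_sub_nonneg q hv
        · exact twoPointNorm_hypercontractive hp hq'₂ hσ₀ hσ₁ hrel hu

lemma one_add_mul_mul_le_twoPointNorm_mul {p q σ u v : ℝ} (hp : 1 < p) (hq : 1 < q)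
    (hσ₀ : 0 ≤ σ) (hσ₁ : σ ≤ 1) (hpq : (p - 1) * (q - 1) = σ ^ 2) (hu : |u| ≤ 1)
    (hv : |v| ≤ 1) :
    1 + σ * u * v ≤ twoPointNorm p (1 + u) (1 - u) * twoPointNorm q (1 + v) (1 - v) := by
  rcases le_total q 2 with hq₂ | hq₂
  · rcases le_total p 2 with hp₂ | hp₂
    · exact one_add_mul_mul_le_of_le_two hp hp₂ hq hq₂ hσ₀ hpq hu hv
    · rw [mul_right_comm, mul_comm (twoPointNorm p _ _)]
      exact one_add_mul_mul_le_of_two_le hq hp₂ hσ₀ hσ₁ (by rw [mul_comm, hpq]) hv hu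
  · exact one_add_mul_mul_le_of_two_le hp hq₂ hσ₀ hσ₁ hpq hu hv

lemma exists_eq_mul_one_add_and_eq_mul_one_sub {a b : ℝ} (ha : 0 ≤ a) (hb : 0 ≤ b) :
    ∃ A u : ℝ, 0 ≤ A ∧ |u| ≤ 1 ∧ a = A * (1 + u) ∧ b = A * (1 - u) := by
  rcases (add_nonneg ha hb).eq_or_lt with hab | hab
  · exact ⟨0, 0, le_rfl, by simp, by linarith, by linarith⟩
  refine ⟨(a + b) / 2, (a - b) / (a + b), by positivity, ?_, ?_, ?_⟩
  · rw [abs_div, abs_of_pos hab, div_le_one hab, abs_le]; constructor <;> linarith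
  all_goals field_simp; ring

lemma twoPoint_noise_le {p q σ a₀ a₁ b₀ b₁ : ℝ} (hp : 1 < p) (hq : 1 < q) (hσ₀ : 0 ≤ σ)
    (hσ₁ : σ ≤ 1) (hpq : (p - 1) * (q - 1) = σ ^ 2) (ha₀ : 0 ≤ a₀) (ha₁ : 0 ≤ a₁)
    (hb₀ : 0 ≤ b₀) (hb₁ : 0 ≤ b₁) :
    ((1 + σ) * (a₀ * b₀ + a₁ * b₁) + (1 - σ) * (a₀ * b₁ + a₁ * b₀)) / 4
      ≤ twoPointNorm p a₀ a₁ * twoPointNorm q b₀ b₁ := by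
  obtain ⟨A, u, hA, hu, rfl, rfl⟩ := exists_eq_mul_one_add_and_eq_mul_one_sub ha₀ ha₁
  obtain ⟨B, v, hB, hv, rfl, rfl⟩ := exists_eq_mul_one_add_and_eq_mul_one_sub hb₀ hb₁
  obtain ⟨hu₁, hu₂⟩ := abs_le.1 hu
  obtain ⟨hv₁, hv₂⟩ := abs_le.1 hv
  rw [twoPointNorm_mul (by linarith) hA (by linarith) (by linarith),
    twoPointNorm_mul (by linarith) hB (by linarith) (by linarith)]
  calc _ = A * B * (1 + σ * u * v) := by ring
    _ ≤ A * B * (twoPointNorm p (1 + u) (1 - u) * twoPointNorm q (1 + v) (1 - v)) := by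
        gcongr; exact one_add_mul_mul_le_twoPointNorm_mul hp hq hσ₀ hσ₁ hpq hu hv
    _ = _ := by ring

section Cube

variable {d : ℕ}

lemma sum_cube_succ (h : (Fin (d + 1) → Bool) → ℝ) :
    ∑ x, h x = ∑ b : Bool, ∑ x : Fin d → Bool, h (Fin.cons b x) := by
  rw [← (Fin.consEquiv fun _ => Bool).sum_comp h, Fintype.sum_prod_type]
  rfl

lemma hExp_succ (h : (Fin (d + 1) → Bool) → ℝ) :
    hExp (d + 1) h
      = (hExp d (fun x => h (Fin.cons false x)) + hExp d (fun x => h (Fin.cons true x))) / 2 := by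
  simp only [hExp, sum_cube_succ h, Fintype.sum_bool, pow_succ]
  field_simp
  ring

lemma hExp_nonneg {f : (Fin d → Bool) → ℝ} (hf : ∀ x, 0 ≤ f x) : 0 ≤ hExp d f :=
  div_nonneg (Finset.sum_nonneg fun x _ => hf x) (by positivity)

lemma hExp_add (f g : (Fin d → Bool) → ℝ) :
    hExp d (fun x => f x + g x) = hExp d f + hExp d g := by
  simp only [hExp, Finset.sum_add_distrib, add_div]

lemma hExp_const_mul (a : ℝ) (h : (Fin d → Bool) → ℝ) :
    hExp d (fun x => a * h x) = a * hExp d h := by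
  simp only [hExp, ← Finset.mul_sum, mul_div_assoc]

noncomputable def bitNoiseW (σ : ℝ) (c b : Bool) : ℝ := if c = b then (1 + σ) / 2 else (1 - σ) / 2

lemma Tnoise_cons (σ : ℝ) (f : (Fin (d + 1) → Bool) → ℝ) (b : Bool) (x : Fin d → Bool) :
    Tnoise σ f (Fin.cons b x)
      = ∑ c, bitNoiseW σ c b * Tnoise σ (fun y => f (Fin.cons c y)) x := by
  simp only [Tnoise, sum_cube_succ (fun y => noiseW σ y (Fin.cons b x) * f y), Finset.mul_sum]
  refine Finset.sum_congr rfl fun c _ => Finset.sum_congr rfl fun y _ => ?_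
  rw [noiseW, Fin.prod_univ_succ]
  simp only [Fin.cons_zero, Fin.cons_succ, bitNoiseW, noiseW]
  ring

noncomputable def cubeNorm (p : ℝ) (f : (Fin d → Bool) → ℝ) : ℝ :=
  hExp d (fun x => f x ^ p) ^ (1 / p)

lemma cubeNorm_nonneg (p : ℝ) {f : (Fin d → Bool) → ℝ} (hf : ∀ x, 0 ≤ f x) :
    0 ≤ cubeNorm p f :=
  rpow_nonneg (hExp_nonneg fun x => rpow_nonneg (hf x) p) _

lemma cubeNorm_succ {p : ℝ} (hp : p ≠ 0) {f : (Fin (d + 1) → Bool) → ℝ} (hf : ∀ x, 0 ≤ f x) :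
    cubeNorm p f = twoPointNorm p (cubeNorm p fun x => f (Fin.cons false x))
      (cubeNorm p fun x => f (Fin.cons true x)) := by
  simp only [cubeNorm, twoPointNorm, one_div,
    rpow_inv_rpow (hExp_nonneg fun x => rpow_nonneg (hf _) p) hp, hExp_succ]

lemma hExp_Tnoise_mul_le {σ p q : ℝ} (hp : 1 < p) (hq : 1 < q) (hσ₀ : 0 ≤ σ) (hσ₁ : σ ≤ 1)
    (hpq : (p - 1) * (q - 1) = σ ^ 2) :
    ∀ {d : ℕ} {f g : (Fin d → Bool) → ℝ}, (∀ x, 0 ≤ f x) → (∀ x, 0 ≤ g x) →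
      hExp d (fun x => Tnoise σ f x * g x) ≤ cubeNorm p f * cubeNorm q g
  | 0, f, g, hf, hg => by
    simp only [cubeNorm, hExp, Tnoise, noiseW, Fintype.sum_unique, pow_zero, div_one,
      Finset.univ_eq_empty, Finset.prod_empty, one_mul, ← rpow_mul (hf _), ← rpow_mul (hg _),
      mul_one_div_cancel (by linarith : p ≠ 0), mul_one_div_cancel (by linarith : q ≠ 0), rpow_one]
    rfl
  | d + 1, f, g, hf, hg => by
    set F : Bool → ℝ := fun c => cubeNorm p fun y => f (Fin.cons c y)
    set G : Bool → ℝ := fun b => cubeNorm q fun x => g (Fin.cons b x)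
    have hw : ∀ c b, 0 ≤ bitNoiseW σ c b := fun c b => by
      unfold bitNoiseW; split_ifs <;> linarith
    calc hExp (d + 1) (fun x => Tnoise σ f x * g x)
        = (∑ b, ∑ c, bitNoiseW σ c b *
            hExp d (fun x => Tnoise σ (fun y => f (Fin.cons c y)) x * g (Fin.cons b x))) / 2 := by
          simp only [hExp_succ, Tnoise_cons, Fintype.sum_bool, add_mul, mul_assoc, hExp_add,
            hExp_const_mul]
          ring
      _ ≤ (∑ b, ∑ c, bitNoiseW σ c b * (F c * G b)) / 2 := by
          gcongr with b _ c _
          · exact hw c b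
          · exact hExp_Tnoise_mul_le hp hq hσ₀ hσ₁ hpq (fun _ => hf _) (fun _ => hg _)
      _ = ((1 + σ) * (F false * G false + F true * G true)
            + (1 - σ) * (F false * G true + F true * G false)) / 4 := by
          simp only [Fintype.sum_bool, bitNoiseW, if_true, Bool.false_eq_true, Bool.true_eq_false,
            if_false]
          ring
      _ ≤ twoPointNorm p (F false) (F true) * twoPointNorm q (G false) (G true) :=
          twoPoint_noise_le hp hq hσ₀ hσ₁ hpq (cubeNorm_nonneg _ fun _ => hf _)
            (cubeNorm_nonneg _ fun _ => hf _) (cubeNorm_nonneg _ fun _ => hg _)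
            (cubeNorm_nonneg _ fun _ => hg _)
      _ = cubeNorm p f * cubeNorm q g := by
          rw [cubeNorm_succ (by linarith) hf, cubeNorm_succ (by linarith) hg]

lemma chi_nonneg (A : Finset (Fin d → Bool)) (x : Fin d → Bool) : 0 ≤ chi A x := by
  unfold chi; split_ifs <;> norm_num

lemma cubeNorm_chi {p : ℝ} (hp : p ≠ 0) (A : Finset (Fin d → Bool)) :
    cubeNorm p (chi A) = ((A.card : ℝ) / 2 ^ d) ^ (1 / p) := by
  have hchi : ∀ x, chi A x ^ p = chi A x := fun x => by
    unfold chi; split_ifs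
    exacts [one_rpow p, zero_rpow hp]
  simp only [cubeNorm, hchi]
  simp [hExp, chi]

end Cube

lemma rpow_mul_rpow_le_div {p q γ m a b : ℝ} (hp : 0 < p) (hq : 0 < q) (he : 0 ≤ 1 + q / p - q)
    (hγ : 0 ≤ γ) (ha : 0 < a) (hb : 0 ≤ b) (ham : a ≤ 1 / m)
    (hγab : γ ≤ 1 / a * (a ^ (1 / p) * b ^ (1 / q))) :
    γ ^ q * m ^ (1 + q / p - q) ≤ b / a := by
  have hm : 0 < m := one_div_pos.1 (ha.trans_le ham)
  have hma : m ≤ a ^ (-1 : ℝ) := by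
    rw [rpow_neg_one, ← one_div]; exact (le_one_div ha hm).1 ham
  have hγ' : γ ≤ a ^ (1 / p - 1) * b ^ (1 / q) := by
    rw [rpow_sub ha, rpow_one]; convert hγab using 1; ring
  calc γ ^ q * m ^ (1 + q / p - q)
      ≤ (a ^ (1 / p - 1) * b ^ (1 / q)) ^ q * (a ^ (-1 : ℝ)) ^ (1 + q / p - q) := by gcongr
    _ = a ^ ((1 / p - 1) * q + -1 * (1 + q / p - q)) * b := by
        rw [mul_rpow (by positivity) (by positivity), ← rpow_mul ha.le, ← rpow_mul ha.le,
          ← rpow_mul hb, one_div_mul_cancel hq.ne', rpow_one, rpow_add ha]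
        ring
    _ = b / a := by
        rw [show (1 / p - 1) * q + -1 * (1 + q / p - q) = -1 by field_simp; ring, rpow_neg_one,
          div_eq_inv_mul]

end Hypercube

open Hypercube

theorem stmt12_general (d : ℕ) (σ p q γ m : ℝ) (hσ0 : 0 < σ) (hσ1 : σ < 1)
    (hp : 1 ≤ p) (hq : 1 ≤ q) (hpq : (p - 1) * (q - 1) = σ ^ 2)
    (hγ0 : 0 ≤ γ)
    (A B : Finset (Fin d → Bool)) (hA : A.Nonempty)
    (hAsmall : (A.card : ℝ) / 2 ^ d ≤ 1 / m)
    (hcorr : γ ≤ (1 / ((A.card : ℝ) / 2 ^ d)) *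
      hExp d (fun x => Tnoise σ (chi A) x * chi B x)) :
    γ ^ q * m ^ (1 + q / p - q)
      ≤ ((B.card : ℝ) / 2 ^ d) / ((A.card : ℝ) / 2 ^ d) := by
  have hp₁ : 1 < p := hp.lt_of_ne fun h => by subst h; nlinarith
  have hq₁ : 1 < q := hq.lt_of_ne fun h => by subst h; nlinarith
  have hexp : 1 + q / p - q = (1 - σ ^ 2) / p := by rw [← hpq]; field_simp; ring
  have hbonami := hExp_Tnoise_mul_le hp₁ hq₁ hσ0.le hσ1.le hpq (chi_nonneg A) (chi_nonneg B)
  rw [cubeNorm_chi (by linarith), cubeNorm_chi (by linarith)] at hbonami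
  have hμA : 0 < (A.card : ℝ) / 2 ^ d := by have := hA.card_pos; positivity
  refine rpow_mul_rpow_le_div (by linarith) (by linarith) ?_ hγ0 hμA (by positivity) hAsmall
    (hcorr.trans (by gcongr))
  rw [hexp]
  exact div_nonneg (by nlinarith) (by linarith)

/-- Robust expansion lower bound for the hypercube: for every admissible pair `(A, B)`
(`A` of measure at most `1/m`, and `Pr[x ∈ B ∣ y ∈ A] ≥ γ` where `x` is uniform and
`y ∼ N_σ(x)`), the ratio `μ(B)/μ(A)` is at least `γ^q · m^{1 + q/p - q}`. -/
theorem stmt12 (d : ℕ) (σ p q γ m : ℝ) (hσ0 : 0 < σ) (hσ1 : σ < 1)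
    (hp : 1 ≤ p) (hq : 1 ≤ q) (hpq : (p - 1) * (q - 1) = σ ^ 2)
    (hγ0 : 0 ≤ γ) (hγ1 : γ ≤ 1) (hm : 1 ≤ m)
    (A B : Finset (Fin d → Bool)) (hA : A.Nonempty) (hB : B.Nonempty)
    (hAsmall : (A.card : ℝ) / 2 ^ d ≤ 1 / m)
    (hcorr : γ ≤ (1 / ((A.card : ℝ) / 2 ^ d)) *
      hExp d (fun x => Tnoise σ (chi A) x * chi B x)) :
    γ ^ q * m ^ (1 + q / p - q)
      ≤ ((B.card : ℝ) / 2 ^ d) / ((A.card : ℝ) / 2 ^ d) :=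
  stmt12_general d σ p q γ m hσ0 hσ1 hp hq hpq hγ0 A B hA hAsmall hcorr
end

section
/- Fix c > 1, let σ = 1 - 1/c, and set p = 1 + (log log n)/(log n), q = 1 + σ²(log n)/(log log n) (so (p-1)(q-1) = σ²). If m, w, n satisfy m·w ≥ n · γ^q · m^{1 + q/p - q} for a fixed constant γ ∈ (0,1), and w = n^{o(1)}, then m ≥ n^{1/σ² - o(1)}. In particular, with σ = 1 - 1/c this gives m ≥ n^{(c/(c-1))² - o(1)}. -/
/-!
Taking logarithms, the hypothesis becomes
`log n + q log γ - log w ≤ (1 - (1 + q/p - q)) log m`. Because `(p - 1)(q - 1) = σ²`, the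
coefficient of `log m` equals `(σ² + (p - 1)) / p`, which tends to `σ²`, while `q / log n`
and `log w / log n` tend to `0`. Hence `log m / log n` is eventually above any `1/σ² - ε`.
-/

open Filter Real Topology

noncomputable def expQ (σ x : ℝ) : ℝ := 1 + σ ^ 2 * log x / log (log x)

noncomputable def expP (x : ℝ) : ℝ := 1 + log (log x) / log x

lemma eventually_log_log_pos : ∀ᶠ x : ℝ in atTop, 0 < log (log x) :=
  (tendsto_log_atTop.comp tendsto_log_atTop).eventually_gt_atTop 0

lemma tendsto_log_log_div_log : Tendsto (fun x => log (log x) / log x) atTop (𝓝 0) :=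
  isLittleO_log_id_atTop.tendsto_div_nhds_zero.comp tendsto_log_atTop

lemma one_sub_exponent_eq (s : ℝ) {a b : ℝ} (ha : 0 < a) (hb : 0 < b) :
    1 - (1 + (1 + s * a / b) / (1 + b / a) - (1 + s * a / b)) = (s + b / a) / (1 + b / a) := by
  field_simp
  ring

lemma tendsto_one_sub_exponent (σ : ℝ) :
    Tendsto (fun x => 1 - (1 + expQ σ x / expP x - expQ σ x)) atTop (𝓝 (σ ^ 2)) := by
  have hlim : Tendsto (fun x => (σ ^ 2 + log (log x) / log x) / (1 + log (log x) / log x))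
      atTop (𝓝 ((σ ^ 2 + 0) / (1 + 0))) :=
    ((tendsto_log_log_div_log.const_add _).div (tendsto_log_log_div_log.const_add _)
      (by norm_num))
  rw [add_zero, add_zero, div_one] at hlim
  refine hlim.congr' ?_
  filter_upwards [tendsto_log_atTop.eventually_gt_atTop 0, eventually_log_log_pos] with x hL hLL
  exact (one_sub_exponent_eq _ hL hLL).symm

lemma tendsto_expQ_div_log (σ : ℝ) : Tendsto (fun x => expQ σ x / log x) atTop (𝓝 0) := by
  have hlim : Tendsto (fun x => (log x)⁻¹ + σ ^ 2 * (log (log x))⁻¹) atTop (𝓝 (0 + σ ^ 2 * 0)) :=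
    (tendsto_log_atTop.inv_tendsto_atTop).add
      (((tendsto_log_atTop.comp tendsto_log_atTop).inv_tendsto_atTop).const_mul _)
  rw [mul_zero, add_zero] at hlim
  refine hlim.congr' ?_
  filter_upwards [tendsto_log_atTop.eventually_gt_atTop 0, eventually_log_log_pos] with x hL hLL
  simp only [expQ]
  field_simp

lemma tendsto_log_div_log_of_le_rpow {w : ℕ → ℝ} (hw1 : ∀ n, 1 ≤ w n)
    (hw : ∀ ε > (0 : ℝ), ∀ᶠ n : ℕ in atTop, w n ≤ (n : ℝ) ^ ε) :
    Tendsto (fun n : ℕ => log (w n) / log n) atTop (𝓝 0) := by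
  refine tendsto_order.2 ⟨fun a ha => Eventually.of_forall fun n => ha.trans_le ?_, fun ε hε => ?_⟩
  · exact div_nonneg (log_nonneg (hw1 n)) (log_natCast_nonneg n)
  filter_upwards [hw (ε / 2) (half_pos hε), eventually_ge_atTop 2] with n hwn hn
  have hlog : 0 < log n := log_pos (by exact_mod_cast hn)
  have := log_le_log (one_pos.trans_le (hw1 n)) hwn
  rw [log_rpow (by positivity)] at this
  rw [div_lt_iff₀ hlog]
  linarith [mul_pos hε hlog]

lemma log_le_of_mul_rpow_le {x γ a b Q E : ℝ} (hx : 0 < x) (hγ : 0 < γ) (ha : 0 < a) (hb : 0 < b)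
    (h : x * γ ^ Q * a ^ E ≤ a * b) : log x + Q * log γ - log b ≤ (1 - E) * log a := by
  have := log_le_log (by positivity) h
  rw [log_mul (by positivity) (by positivity), log_mul (by positivity) (by positivity),
    log_mul (by positivity) (by positivity), log_rpow hγ, log_rpow ha] at this
  linarith

lemma tendsto_log_add_expQ_mul_sub_log_div_log {σ γ : ℝ} {w : ℕ → ℝ} (hw1 : ∀ n, 1 ≤ w n)
    (hw : ∀ ε > (0 : ℝ), ∀ᶠ n : ℕ in atTop, w n ≤ (n : ℝ) ^ ε) :
    Tendsto (fun n : ℕ => (log n + expQ σ n * log γ - log (w n)) / log n) atTop (𝓝 1) := by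
  have hlim := (((tendsto_expQ_div_log σ).comp tendsto_natCast_atTop_atTop).mul_const (log γ)
    |>.const_add 1).sub (tendsto_log_div_log_of_le_rpow hw1 hw)
  rw [zero_mul, add_zero, sub_zero] at hlim
  refine hlim.congr' ?_
  filter_upwards [eventually_ge_atTop 2] with n hn
  have hlog : 0 < log n := log_pos (by exact_mod_cast hn)
  simp only [Function.comp_apply]
  field_simp

lemma mul_le_of_lt_div_div {r X L D M : ℝ} (hL : 0 < L) (hD : 0 < D) (hr : r < X / L / D)
    (h : X ≤ D * M) : r * L ≤ M := by
  rw [lt_div_iff₀ hD, lt_div_iff₀ hL] at hr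
  nlinarith

theorem stmt13_general (c γ σ : ℝ) (hc : 1 < c) (hσ : σ = 1 - 1 / c)
    (hγ0 : 0 < γ)
    (m w : ℕ → ℝ) (hm1 : ∀ n, 1 ≤ m n) (hw1 : ∀ n, 1 ≤ w n)
    (hw : ∀ ε > (0 : ℝ), ∀ᶠ n : ℕ in atTop, w n ≤ (n : ℝ) ^ ε)
    (hlb : ∀ᶠ n : ℕ in atTop,
      (n : ℝ) * γ ^ (1 + σ ^ 2 * Real.log n / Real.log (Real.log n)) *
          m n ^ (1 + (1 + σ ^ 2 * Real.log n / Real.log (Real.log n)) /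
              (1 + Real.log (Real.log n) / Real.log n)
            - (1 + σ ^ 2 * Real.log n / Real.log (Real.log n)))
        ≤ m n * w n) :
    ∀ ε > (0 : ℝ), ∀ᶠ n : ℕ in atTop, (n : ℝ) ^ (1 / σ ^ 2 - ε) ≤ m n := by
  intro ε hε
  have hσ0 : σ ^ 2 ≠ 0 := by
    have : 1 / c < 1 := (div_lt_one (one_pos.trans hc)).2 hc
    exact pow_ne_zero 2 (by linarith)
  have hlb' : ∀ᶠ n : ℕ in atTop,
      (n : ℝ) * γ ^ expQ σ n * m n ^ (1 + expQ σ n / expP n - expQ σ n) ≤ m n * w n := hlb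
  have hden := (tendsto_one_sub_exponent σ).comp tendsto_natCast_atTop_atTop
  have hratio := (tendsto_log_add_expQ_mul_sub_log_div_log (σ := σ) (γ := γ) hw1 hw).div hden hσ0
  filter_upwards [hlb', hratio.eventually_const_lt (sub_lt_self _ hε),
    hden.eventually_const_lt (lt_of_le_of_ne (sq_nonneg σ) hσ0.symm),
    eventually_ge_atTop 2] with n hlbn hn hdenn hn2
  have hn0 : (0 : ℝ) < n := by positivity
  have hm0 : 0 < m n := one_pos.trans_le (hm1 n)
  rw [← log_le_log_iff (by positivity) hm0, log_rpow hn0]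
  exact mul_le_of_lt_div_div (log_pos (by exact_mod_cast hn2)) hdenn hn
    (log_le_of_mul_rpow_le hn0 hγ0 hm0 (one_pos.trans_le (hw1 n)) hlbn)

theorem stmt13 (c γ σ : ℝ) (hc : 1 < c) (hσ : σ = 1 - 1 / c)
    (hγ0 : 0 < γ) (hγ1 : γ < 1)
    (m w : ℕ → ℝ) (hm1 : ∀ n, 1 ≤ m n) (hw1 : ∀ n, 1 ≤ w n)
    (hw : ∀ ε > (0 : ℝ), ∀ᶠ n : ℕ in atTop, w n ≤ (n : ℝ) ^ ε)
    (hlb : ∀ᶠ n : ℕ in atTop,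
      (n : ℝ) * γ ^ (1 + σ ^ 2 * Real.log n / Real.log (Real.log n)) *
          m n ^ (1 + (1 + σ ^ 2 * Real.log n / Real.log (Real.log n)) /
              (1 + Real.log (Real.log n) / Real.log n)
            - (1 + σ ^ 2 * Real.log n / Real.log (Real.log n)))
        ≤ m n * w n) :
    ∀ ε > (0 : ℝ), ∀ᶠ n : ℕ in atTop, (n : ℝ) ^ (1 / σ ^ 2 - ε) ≤ m n :=
  stmt13_general c γ σ hc hσ hγ0 m w hm1 hw1 hw hlb
end

section
/- (Adaptive-to-nonadaptive reduction for two probes.) Suppose a deterministic data structure with cells of w bits answers queries by two adaptive cell probes and succeeds with probability at least 1/2 + η. Then there is a data structure making its two cell probes non-adaptively that succeeds with probability at least 1/2 + η/2^w: guess the content of the first probed cell uniformly among 2^w values, simulate the adaptive algorithm with that guess to determine both probe locations, probe both non-adaptively, output the adaptive algorithm's answer if the guess was correct and a uniformly random bit otherwise. -/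
/-! For every query exactly one of the `2^w` guesses is correct, and with that guess the
nonadaptive scheme replays the adaptive run; each of the other `2^w - 1` guesses scores `1/2`.
Averaging over guesses, the success probability is `(S + (2^w - 1)/2) / 2^w = 1/2 + (S - 1/2)/2^w`,
where `S ≥ 1/2 + η` is the adaptive success probability. -/

open Finset

theorem Fintype.sum_ite_eq_else_const {α R : Type*} [Fintype α] [DecidableEq α] [Ring R]
    (a : α) (h : α → R) (c : R) :
    ∑ g, (if a = g then h g else c) = h a + ((Fintype.card α : R) - 1) * c := by
  have hsplit : ∀ g, (if a = g then h g else c) = (if a = g then h g - c else 0) + c := by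
    intro g; split_ifs <;> simp
  simp only [hsplit, sum_add_distrib, sum_ite_eq, sum_const, card_univ, nsmul_eq_mul]
  rw [sub_one_mul]
  abel

theorem sum_sum_mul_ite_eq_else_const {Q G R : Type*} [Fintype Q] [Fintype G] [DecidableEq G]
    [CommRing R] (μ : Q → R) (key : Q → G) (A : Q → G → R) (c : R) :
    ∑ g, ∑ q, μ q * (if key q = g then A q g else c)
      = ∑ q, μ q * A q (key q) + ((Fintype.card G : R) - 1) * c * ∑ q, μ q := by
  rw [sum_comm, mul_sum, ← sum_add_distrib]
  refine sum_congr rfl fun q _ => ?_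
  rw [← mul_sum, Fintype.sum_ite_eq_else_const]
  ring

theorem stmt17_general {Q : Type*} [Fintype Q] (m w : ℕ)
    (μ : Q → ℝ) (hμ1 : ∑ q, μ q = 1)
    (D : Fin m → Fin (2 ^ w))
    (π₁ : Q → Fin m) (π₂ : Q → Fin (2 ^ w) → Fin m)
    (out : Q → Fin (2 ^ w) → Fin (2 ^ w) → Bool)
    (f : Q → Bool) (η : ℝ)
    (hsucc : (1 : ℝ) / 2 + η ≤ ∑ q, μ q *
      (if out q (D (π₁ q)) (D (π₂ q (D (π₁ q)))) = f q then 1 else 0)) :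
    (1 : ℝ) / 2 + η / 2 ^ w ≤ (1 / 2 ^ w) * ∑ g : Fin (2 ^ w), ∑ q, μ q *
      (if D (π₁ q) = g then (if out q g (D (π₂ q g)) = f q then (1 : ℝ) else 0)
        else 1 / 2) := by
  rw [sum_sum_mul_ite_eq_else_const μ (fun q => D (π₁ q))
    (fun q g => if out q g (D (π₂ q g)) = f q then (1 : ℝ) else 0), hμ1, Fintype.card_fin, Nat.cast_pow, Nat.cast_ofNat]
  have hpos : (0 : ℝ) < 2 ^ w := by positivity
  rw [one_div_mul_eq_div, le_div_iff₀ hpos, add_mul, div_mul_cancel₀ η hpos.ne']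
  linarith

/-- Adaptive-to-nonadaptive reduction for two cell probes.  The adaptive scheme
(first probe `π₁ q`, second probe `π₂ q` depending on the first cell's content,
output `out`) succeeds with probability at least `1/2 + η` over the query
distribution `μ`.  The nonadaptive scheme guesses the content `g` of the first
probed cell uniformly among the `2^w` values, probes cells `π₁ q` and `π₂ q g`
non-adaptively, outputs the adaptive answer if the guess was correct, and a
uniformly random bit (success probability `1/2`) otherwise; it succeeds with
probability at least `1/2 + η/2^w`. -/
theorem stmt17 {Q : Type*} [Fintype Q] (m w : ℕ)
    (μ : Q → ℝ) (hμ0 : ∀ q, 0 ≤ μ q) (hμ1 : ∑ q, μ q = 1)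
    (D : Fin m → Fin (2 ^ w))
    (π₁ : Q → Fin m) (π₂ : Q → Fin (2 ^ w) → Fin m)
    (out : Q → Fin (2 ^ w) → Fin (2 ^ w) → Bool)
    (f : Q → Bool) (η : ℝ)
    (hsucc : (1 : ℝ) / 2 + η ≤ ∑ q, μ q *
      (if out q (D (π₁ q)) (D (π₂ q (D (π₁ q)))) = f q then 1 else 0)) :
    (1 : ℝ) / 2 + η / 2 ^ w ≤ (1 / 2 ^ w) * ∑ g : Fin (2 ^ w), ∑ q, μ q *
      (if D (π₁ q) = g then (if out q g (D (π₂ q g)) = f q then (1 : ℝ) else 0)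
        else 1 / 2) :=
  stmt17_general m w μ hμ1 D π₁ π₂ out f η hsucc
end
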